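/- arXiv:2405.06973 — 5 statements merged into one kernel-verified Lean document; each statement's English description precedes it below -/
import Mathlib

section
/- PInc entailment under team semantics satisfies the Or rule: if α ⊨ γ and β ⊨ γ for PInc formulas, then α ∨ β ⊨ γ. -/
inductive PIncForm (V : Type) : Type
  | pos : V → PIncForm V
  | neg : V → PIncForm V
  | bot : PIncForm V
  | top : PIncForm V
  | inc : List V → List V → PIncForm V
  | conj : PIncForm V → PIncForm V → PIncForm V
  | disj : PIncForm V → PIncForm V → PIncForm V

abbrev Team (V : Type) := Set (V → Bool)

def PIncSat {V : Type} : PIncForm V → Team V → Prop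
  | .pos p, X => ∀ v ∈ X, v p = true
  | .neg p, X => ∀ v ∈ X, v p = false
  | .bot, X => X = ∅
  | .top, _ => True
  | .inc as bs, X => ∀ v ∈ X, ∃ w ∈ X, as.map v = bs.map w
  | .conj a b, X => PIncSat a X ∧ PIncSat b X
  | .disj a b, X => ∃ Y Z, X = Y ∪ Z ∧ PIncSat a Y ∧ PIncSat b Z

theorem PIncSat.union {V : Type} {φ : PIncForm V} {Y Z : Team V}
    (hY : PIncSat φ Y) (hZ : PIncSat φ Z) : PIncSat φ (Y ∪ Z) := by
  induction φ generalizing Y Z with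
  | pos p | neg p => rintro v (hv | hv); exacts [hY v hv, hZ v hv]
  | bot => simp only [PIncSat] at hY hZ ⊢; rw [hY, hZ, Set.union_empty]
  | top => trivial
  | inc as bs =>
    rintro v (hv | hv)
    · obtain ⟨w, hw, hvw⟩ := hY v hv
      exact ⟨w, .inl hw, hvw⟩
    · obtain ⟨w, hw, hvw⟩ := hZ v hv
      exact ⟨w, .inr hw, hvw⟩
  | conj a b iha ihb => exact ⟨iha hY.1 hZ.1, ihb hY.2 hZ.2⟩
  | disj a b iha ihb =>
    obtain ⟨Y₁, Y₂, rfl, haY, hbY⟩ := hY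
    obtain ⟨Z₁, Z₂, rfl, haZ, hbZ⟩ := hZ
    exact ⟨Y₁ ∪ Z₁, Y₂ ∪ Z₂, Set.union_union_union_comm .., iha haY haZ, ihb hbY hbZ⟩

/-- PInc team entailment satisfies the Or rule. -/
theorem pinc_or_rule {V : Type} (α β γ : PIncForm V)
    (hα : ∀ X : Team V, PIncSat α X → PIncSat γ X)
    (hβ : ∀ X : Team V, PIncSat β X → PIncSat γ X) :
    ∀ X : Team V, PIncSat (PIncForm.disj α β) X → PIncSat γ X := by
  rintro X ⟨Y, Z, rfl, hY, hZ⟩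
  exact (hα Y hY).union (hβ Z hZ)
end

section
/- For any preferential model W, the induced entailment ⊢_W satisfies Cut: if α∧β ⊢_W γ and α ⊢_W β, then α ⊢_W γ. -/
/-- A preferential model for a logic with interpretations `Ω`, formulas `Form`,
and satisfaction relation `Sat`. -/
structure PrefModel (Ω Form : Type) (Sat : Ω → Form → Prop) where
  S : Type
  lab : S → Ω
  lt : S → S → Prop
  lt_irrefl : ∀ s, ¬ lt s s
  lt_trans : ∀ a b c, lt a b → lt b c → lt a c
  smooth : ∀ (φ : Form) (s : S), Sat (lab s) φ →
    (∀ s', Sat (lab s') φ → ¬ lt s' s) ∨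
      ∃ s', Sat (lab s') φ ∧ lt s' s ∧ ∀ s'', Sat (lab s'') φ → ¬ lt s'' s'

/-- `s` is a `≺`-minimal state among those whose label satisfies `φ`. -/
def PrefModel.minimal {Ω Form : Type} {Sat : Ω → Form → Prop}
    (W : PrefModel Ω Form Sat) (φ : Form) (s : W.S) : Prop :=
  Sat (W.lab s) φ ∧ ∀ s', Sat (W.lab s') φ → ¬ W.lt s' s

/-- The preferential entailment relation induced by `W`. -/
def PrefModel.ent {Ω Form : Type} {Sat : Ω → Form → Prop}
    (W : PrefModel Ω Form Sat) (α β : Form) : Prop :=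
  ∀ s, W.minimal α s → Sat (W.lab s) β

theorem PrefModel.minimal.of_imp {Ω Form : Type} {Sat : Ω → Form → Prop}
    {W : PrefModel Ω Form Sat} {φ ψ : Form} {s : W.S}
    (himp : ∀ ω, Sat ω ψ → Sat ω φ) (hs : W.minimal φ s) (hψ : Sat (W.lab s) ψ) :
    W.minimal ψ s :=
  ⟨hψ, fun s' hs' => hs.2 s' (himp _ hs')⟩

/-- Cut for preferential entailment, for any conjunction connective whose
satisfaction is the conjunction of the satisfactions. -/
theorem pref_cut {Ω Form : Type} {Sat : Ω → Form → Prop}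
    (W : PrefModel Ω Form Sat) (conj : Form → Form → Form)
    (hconj : ∀ (ω : Ω) (a b : Form), Sat ω (conj a b) ↔ Sat ω a ∧ Sat ω b)
    (α β γ : Form)
    (h1 : W.ent (conj α β) γ) (h2 : W.ent α β) :
    W.ent α γ := by
  intro s hs
  have hαβ : Sat (W.lab s) (conj α β) := (hconj _ _ _).mpr ⟨hs.1, h2 s hs⟩
  exact h1 s (hs.of_imp (fun ω h => ((hconj ω α β).mp h).1) hαβ)
end

section
/- For any preferential model W, the induced entailment ⊢_W satisfies Cautious Monotony: if α ⊢_W β and α ⊢_W γ, then α∧β ⊢_W γ. -/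
namespace PrefModel

variable {Ω Form : Type} {Sat : Ω → Form → Prop} (W : PrefModel Ω Form Sat)

theorem minimal_or_exists_minimal_lt {φ : Form} {s : W.S} (hs : Sat (W.lab s) φ) :
    W.minimal φ s ∨ ∃ s', W.minimal φ s' ∧ W.lt s' s := by
  rcases W.smooth φ s hs with hmin | ⟨s', hs', hlt, hmin'⟩
  · exact Or.inl ⟨hs, hmin⟩
  · exact Or.inr ⟨s', ⟨hs', hmin'⟩, hlt⟩

theorem minimal_of_minimal_conj {conj : Form → Form → Form}
    (hconj : ∀ (ω : Ω) (a b : Form), Sat ω (conj a b) ↔ Sat ω a ∧ Sat ω b)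
    {α β : Form} (hαβ : W.ent α β) {s : W.S} (hs : W.minimal (conj α β) s) :
    W.minimal α s := by
  obtain ⟨hsαβ, hsmin⟩ := hs
  rcases W.minimal_or_exists_minimal_lt ((hconj _ α β).1 hsαβ).1 with hsα | ⟨s', hs'α, hlt⟩
  · exact hsα
  · have hs'αβ : Sat (W.lab s') (conj α β) := (hconj _ α β).2 ⟨hs'α.1, hαβ s' hs'α⟩
    exact absurd hlt (hsmin s' hs'αβ)

end PrefModel

/-- Cautious Monotony for preferential entailment, for any conjunction
connective whose satisfaction is the conjunction of the satisfactions. -/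
theorem pref_cautious_monotony {Ω Form : Type} {Sat : Ω → Form → Prop}
    (W : PrefModel Ω Form Sat) (conj : Form → Form → Form)
    (hconj : ∀ (ω : Ω) (a b : Form), Sat ω (conj a b) ↔ Sat ω a ∧ Sat ω b)
    (α β γ : Form)
    (h1 : W.ent α β) (h2 : W.ent α γ) :
    W.ent (conj α β) γ :=
  fun s hs => h2 s (W.minimal_of_minimal_conj hconj h1 hs)
end

section
/- For any team X over a finite variable set N = {p₁,…,pₙ}, the formula Θ_X := ⋁_{v∈X} (p₁^{v(p₁)} ∧ … ∧ pₙ^{v(pₙ)}) (where p^1 = p and p^0 = ¬p, and the empty disjunction is ⊥) defines exactly the downward closure of X: for every team Y over N, Y ⊨ Θ_X if and only if Y ⊆ X. -/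
inductive PLForm (V : Type) : Type
  | pos : V → PLForm V
  | neg : V → PLForm V
  | bot : PLForm V
  | top : PLForm V
  | conj : PLForm V → PLForm V → PLForm V
  | disj : PLForm V → PLForm V → PLForm V

def PLSat {V : Type} : PLForm V → Team V → Prop
  | .pos p, X => ∀ v ∈ X, v p = true
  | .neg p, X => ∀ v ∈ X, v p = false
  | .bot, X => X = ∅
  | .top, _ => True
  | .conj a b, X => PLSat a X ∧ PLSat b X
  | .disj a b, X => ∃ Y Z, X = Y ∪ Z ∧ PLSat a Y ∧ PLSat b Z

/-- The conjunction of literals `p₁^{v(p₁)} ∧ … ∧ pₙ^{v(pₙ)}` describing the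
valuation `v`. -/
def litConj {n : ℕ} (v : Fin n → Bool) : PLForm (Fin n) :=
  (List.finRange n).foldr
    (fun i acc => PLForm.conj (if v i then PLForm.pos i else PLForm.neg i) acc)
    PLForm.top

/-- `Θ_X`: the disjunction, over `v ∈ X`, of the literal descriptions of `v`
(the empty disjunction being `⊥`). -/
noncomputable def Theta {n : ℕ} (X : Finset (Fin n → Bool)) : PLForm (Fin n) :=
  (X.toList.map litConj).foldr PLForm.disj PLForm.bot

/-!
Each literal conjunction of `v` defines the subteams of `{v}`. A split disjunction of
formulas defining the subteams of `A` and of `B` defines the subteams of `A ∪ B`: split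
`Y ⊆ A ∪ B` as `(Y ∩ A) ∪ (Y ∩ B)`. Hence `Θ_X` defines the subteams of `⋃ v ∈ X, {v} = X`.
-/

namespace PLSat

variable {V : Type}

theorem foldr_conj_top {α : Type} (f : α → PLForm V) (l : List α) (Y : Team V) :
    PLSat (l.foldr (fun a acc => .conj (f a) acc) .top) Y ↔ ∀ a ∈ l, PLSat (f a) Y := by
  induction l with
  | nil => simp [PLSat]
  | cons a t ih => simp [PLSat, ih]

theorem disj_iff_subset_union {φ ψ : PLForm V} {A B : Set (V → Bool)}
    (hφ : ∀ Y, PLSat φ Y ↔ Y ⊆ A) (hψ : ∀ Y, PLSat ψ Y ↔ Y ⊆ B) (Y : Team V) :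
    PLSat (.disj φ ψ) Y ↔ Y ⊆ A ∪ B := by
  simp only [PLSat, hφ, hψ]
  constructor
  · rintro ⟨Z, W, rfl, hZ, hW⟩
    exact Set.union_subset_union hZ hW
  · intro hY
    refine ⟨Y ∩ A, Y ∩ B, ?_, Set.inter_subset_right, Set.inter_subset_right⟩
    rw [← Set.inter_union_distrib_left, Set.inter_eq_left.2 hY]

theorem foldr_disj_bot {α : Type} (f : α → PLForm V) (S : α → Set (V → Bool))
    (hf : ∀ a Y, PLSat (f a) Y ↔ Y ⊆ S a) (l : List α) (Y : Team V) :
    PLSat ((l.map f).foldr .disj .bot) Y ↔ Y ⊆ ⋃ a ∈ l, S a := by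
  induction l generalizing Y with
  | nil => simp [PLSat]
  | cons a t ih =>
    simpa using disj_iff_subset_union (hf a) ih Y

end PLSat

theorem PLSat_litConj {n : ℕ} (v : Fin n → Bool) (Y : Team (Fin n)) :
    PLSat (litConj v) Y ↔ Y ⊆ {v} := by
  have hlit : ∀ i, PLSat (if v i then .pos i else .neg i) Y ↔ ∀ w ∈ Y, w i = v i := by
    intro i
    cases v i <;> simp [PLSat]
  rw [litConj, PLSat.foldr_conj_top]
  simp only [hlit, List.mem_finRange, true_implies, Set.subset_singleton_iff, funext_iff]
  exact forall_comm.trans (forall_congr' fun _ => forall_comm)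

/-- `Θ_X` defines exactly the downward closure of the team `X`. -/
theorem theta_defines_subteams {n : ℕ} (X : Finset (Fin n → Bool))
    (Y : Team (Fin n)) : PLSat (Theta X) Y ↔ Y ⊆ (X : Set (Fin n → Bool)) := by
  rw [Theta, PLSat.foldr_disj_bot litConj (fun v => {v}) PLSat_litConj]
  simp only [Finset.mem_toList, ← Finset.mem_coe, Set.biUnion_of_singleton]
end

section
/- For the preferential model W_sub over PDL whose states are all nonempty teams ordered by Y ≺ X iff Y ⊊ X, the induced entailment satisfies: A ⊢_{W_sub} B if and only if A^f ⊨^c B^f, where φ^f is the flattening of φ (replace every dependence atom by ⊤) and ⊨^c is classical propositional entailment over single valuations. -/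
inductive PDLForm (V : Type) : Type
  | pos : V → PDLForm V
  | neg : V → PDLForm V
  | bot : PDLForm V
  | top : PDLForm V
  | dep : List V → V → PDLForm V
  | conj : PDLForm V → PDLForm V → PDLForm V
  | disj : PDLForm V → PDLForm V → PDLForm V

def PDLSat {V : Type} : PDLForm V → Team V → Prop
  | .pos p, X => ∀ v ∈ X, v p = true
  | .neg p, X => ∀ v ∈ X, v p = false
  | .bot, X => X = ∅
  | .top, _ => True
  | .dep as b, X => ∀ v ∈ X, ∀ w ∈ X, as.map v = as.map w → v b = w b
  | .conj a b, X => PDLSat a X ∧ PDLSat b X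
  | .disj a b, X => ∃ Y Z, X = Y ∪ Z ∧ PDLSat a Y ∧ PDLSat b Z

/-- Classical (single-valuation) satisfaction for PL formulas. -/
def PLSatC {V : Type} : PLForm V → (V → Bool) → Prop
  | .pos p, v => v p = true
  | .neg p, v => v p = false
  | .bot, _ => False
  | .top, _ => True
  | .conj a b, v => PLSatC a v ∧ PLSatC b v
  | .disj a b, v => PLSatC a v ∨ PLSatC b v

/-- The flattening of a PDL formula: replace every dependence atom by `⊤`. -/
def flatten {V : Type} : PDLForm V → PLForm V
  | .pos p => .pos p
  | .neg p => .neg p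
  | .bot => .bot
  | .top => .top
  | .dep _ _ => .top
  | .conj a b => .conj (flatten a) (flatten b)
  | .disj a b => .disj (flatten a) (flatten b)

/-- Entailment in the preferential model `W_sub`: states are the nonempty
teams, labelled by themselves, with `Y ≺ X` iff `Y ⊊ X`; `A ⊢ B` iff every
`⊊`-minimal nonempty team satisfying `A` satisfies `B`. -/
def entWsub {V : Type} (A B : PDLForm V) : Prop :=
  ∀ X : Team V, X.Nonempty → PDLSat A X →
    (∀ Y : Team V, Y.Nonempty → PDLSat A Y → ¬ Y ⊂ X) → PDLSat B X

/-!
PDL is downwards closed and the empty team satisfies every formula, so the `⊊`-minimal nonempty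
teams satisfying `A` are exactly the singletons `{v}` with `{v} ⊨ A`. On a singleton team every
dependence atom holds, and a split of `{v}` for a disjunction puts `v` into one of the two parts,
so `{v} ⊨ φ` is classical satisfaction of the flattening `φ^f` by `v`.
-/

theorem PDLSat.of_empty {V : Type} (φ : PDLForm V) : PDLSat φ (∅ : Team V) := by
  induction φ with
  | pos | neg | dep => simp [PDLSat]
  | bot => rfl
  | top => trivial
  | conj _ _ ha hb => exact ⟨ha, hb⟩
  | disj _ _ ha hb => exact ⟨∅, ∅, (Set.union_empty ∅).symm, ha, hb⟩

theorem PDLSat.mono {V : Type} {φ : PDLForm V} {X Y : Team V} (hX : PDLSat φ X) (hYX : Y ⊆ X) :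
    PDLSat φ Y := by
  induction φ generalizing X Y with
  | pos | neg => exact fun v hv => hX v (hYX hv)
  | dep => exact fun v hv w hw => hX v (hYX hv) w (hYX hw)
  | bot => exact Set.subset_eq_empty hYX hX
  | top => trivial
  | conj _ _ ha hb => exact ⟨ha hX.1 hYX, hb hX.2 hYX⟩
  | disj _ _ ha hb =>
    obtain ⟨P, Q, rfl, hP, hQ⟩ := hX
    exact ⟨Y ∩ P, Y ∩ Q, by rw [← Set.inter_union_distrib_left, Set.inter_eq_left.mpr hYX],
      ha hP Set.inter_subset_right, hb hQ Set.inter_subset_right⟩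

theorem PDLSat_singleton_iff {V : Type} (φ : PDLForm V) (v : V → Bool) :
    PDLSat φ ({v} : Team V) ↔ PLSatC (flatten φ) v := by
  induction φ with
  | pos | neg | bot | top | dep => simp [PDLSat, flatten, PLSatC]
  | conj _ _ ha hb => simp only [PDLSat, flatten, PLSatC, ha, hb]
  | disj a b ha hb =>
    simp only [PDLSat, flatten, PLSatC, ← ha, ← hb]
    constructor
    · rintro ⟨Y, Z, hYZ, hY, hZ⟩
      have hv : v ∈ Y ∪ Z := hYZ ▸ rfl
      rcases hv with hvY | hvZ
      · exact .inl (hY.mono (Set.singleton_subset_iff.mpr hvY))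
      · exact .inr (hZ.mono (Set.singleton_subset_iff.mpr hvZ))
    · rintro (h | h)
      · exact ⟨{v}, ∅, (Set.union_empty _).symm, h, PDLSat.of_empty b⟩
      · exact ⟨∅, {v}, (Set.empty_union _).symm, PDLSat.of_empty a, h⟩

theorem minimal_nonempty_iff_eq_singleton {α : Type*} {P : Set α → Prop}
    (hP : ∀ {X Y : Set α}, P X → Y ⊆ X → P Y) {X : Set α} :
    (X.Nonempty ∧ P X ∧ ∀ Y : Set α, Y.Nonempty → P Y → ¬ Y ⊂ X) ↔ ∃ v, X = {v} ∧ P {v} := by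
  constructor
  · rintro ⟨⟨v, hv⟩, hX, hmin⟩
    have hvX : {v} ⊆ X := Set.singleton_subset_iff.mpr hv
    have hPv : P {v} := hP hX hvX
    refine ⟨v, ?_, hPv⟩
    by_contra hne
    exact hmin {v} (Set.singleton_nonempty v) hPv (hvX.ssubset_of_ne (Ne.symm hne))
  · rintro ⟨v, rfl, hPv⟩
    exact ⟨Set.singleton_nonempty v, hPv, fun Y hY _ hYv =>
      hYv.ne (hY.subset_singleton_iff.mp hYv.subset)⟩

theorem entWsub_iff_forall_singleton {V : Type} (A B : PDLForm V) :
    entWsub A B ↔ ∀ v : V → Bool, PDLSat A {v} → PDLSat B {v} := by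
  have hchar (X : Team V) := minimal_nonempty_iff_eq_singleton (P := PDLSat A) PDLSat.mono (X := X)
  constructor
  · intro h v hv
    obtain ⟨hne, hA, hmin⟩ := (hchar {v}).mpr ⟨v, rfl, hv⟩
    exact h {v} hne hA hmin
  · intro h X hne hA hXmin
    obtain ⟨v, rfl, hv⟩ := (hchar X).mp ⟨hne, hA, hXmin⟩
    exact h v hv

/-- `A ⊢_{W_sub} B` iff the flattenings satisfy classical entailment. -/
theorem entWsub_iff_classical_flattening {V : Type} (A B : PDLForm V) :
    entWsub A B ↔ ∀ v : V → Bool, PLSatC (flatten A) v → PLSatC (flatten B) v := by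
  simp only [entWsub_iff_forall_singleton, PDLSat_singleton_iff]
end
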